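/- Transitive closure of the dominator set does not grow: under the invariant dynamics, if ā(j) = h = ā'(j), then D'⁻¹⁺(j) ⊆ D⁻¹⁺(j), where D⁻¹⁺(j) is the set of vertices from which j is reachable by a nonempty directed path in D, and D' = d_H(D, ā'). -/

import Mathlib

inductive Act : Type
  | t | h | e
deriving DecidableEq, Repr

def switch : Act → Act
  | Act.t => Act.h
  | Act.h => Act.e
  | Act.e => Act.t

def fP (a : Act) (b : Bool) : Act := if b then switch a else a

inductive Cmd : Type
  | pass | force (b : Bool)
deriving DecidableEq

def fS (a : Act) (b : Bool) : Cmd → Act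
  | Cmd.pass => fP a b
  | Cmd.force b' => fP a b'

/-- The updated priority relation `dH D a`: edge `j ↦ k` of `D` is reversed when
`a j = e`, or when `a j = t` and `a k = h`; otherwise kept. -/
def dH {V : Type*} (D : V → V → Prop) (a : V → Act) : V → V → Prop :=
  fun j k =>
    (D j k ∧ ¬ (a j = Act.e ∨ (a j = Act.t ∧ a k = Act.h))) ∨
    (D k j ∧ (a k = Act.e ∨ (a k = Act.t ∧ a j = Act.h)))

/-- `D` is a priority map for `E`: it orients each edge of `E` exactly one way. -/
def IsPriorityMap {V : Type*} (E D : V → V → Prop) : Prop :=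
  (∀ j k, D j k → E j k) ∧ (∀ j k, E j k → (D j k ↔ ¬ D k j))

def topD {V : Type*} (E D : V → V → Prop) (j : V) : Prop := ∀ k, E j k → D j k

def ready {V : Type*} (E D : V → V → Prop) (a : V → Act) (j : V) : Prop :=
  a j = Act.h ∧ topD E D j ∧ ∀ k, E j k → a k ≠ Act.e

open scoped Classical in
noncomputable def gH {V : Type*} (E D : V → V → Prop) (a : V → Act) (j : V) : Cmd :=
  if a j = Act.t ∨ a j = Act.e then Cmd.pass
  else if ready E D a j then Cmd.force true else Cmd.force false

/-- One step of the polled dynamics of the philosophers under the hub controller. -/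
noncomputable def nextA {V : Type*} (E D : V → V → Prop) (a : V → Act) (b : V → Bool) :
    V → Act :=
  fun j => fS (a j) (b j) (gH E D a j)

def safe {V : Type*} (E : V → V → Prop) (a : V → Act) : Prop :=
  ∀ j k, E j k → ¬ (a j = Act.e ∧ a k = Act.e)

def Acyclic {V : Type*} (D : V → V → Prop) : Prop :=
  ∀ j, ¬ Relation.TransGen D j j

/-!
An edge `x ↦ y` of `dH D a'` that ends in a vertex hungry under `a'` can only be an
unreversed edge of `D` whose source is itself hungry under `a'`: a reversed edge into `y`
needs `a' y` to be `e` or `t`. Hungriness under `a'` thus propagates backwards along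
any `dH D a'`-path ending in `j`, and every edge of such a path already lies in `D`.
-/

theorem Relation.TransGen.mono_of_backward_invariant {α : Type*} {r s : α → α → Prop}
    {p : α → Prop} (h : ∀ x y, r x y → p y → s x y ∧ p x) {x y : α}
    (hxy : Relation.TransGen r x y) (hy : p y) : Relation.TransGen s x y ∧ p x := by
  induction hxy using Relation.TransGen.head_induction_on with
  | single hxy =>
    obtain ⟨hs, hx⟩ := h _ _ hxy hy
    exact ⟨.single hs, hx⟩
  | head hxz _ ih =>
    obtain ⟨hzy, hz⟩ := ih
    obtain ⟨hs, hx⟩ := h _ _ hxz hz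
    exact ⟨.head hs hzy, hx⟩

theorem dH_of_hungry_target {V : Type*} {D : V → V → Prop} {a : V → Act} {x y : V}
    (hxy : dH D a x y) (hy : a y = Act.h) : D x y ∧ a x = Act.h := by
  rcases hxy with ⟨hD, hkept⟩ | ⟨_, hreversed⟩
  · refine ⟨hD, ?_⟩
    cases hx : a x <;> simp_all
  · rcases hreversed with h | ⟨h, _⟩ <;> simp [hy] at h

theorem transitive_dominator_does_not_grow_general {V : Type*} (E D : V → V → Prop)
    (a : V → Act) (b : V → Bool)
    (j : V) (hj' : nextA E D a b j = Act.h) :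
    ∀ k, Relation.TransGen (dH D (nextA E D a b)) k j → Relation.TransGen D k j :=
  fun _ hk =>
    (hk.mono_of_backward_invariant (fun _ _ => dH_of_hungry_target) hj').1

theorem transitive_dominator_does_not_grow {V : Type*} (E D : V → V → Prop)
    (hE_irr : ∀ j, ¬ E j j) (hE_symm : ∀ j k, E j k → E k j)
    (hD : IsPriorityMap E D)
    (a : V → Act) (b : V → Bool)
    (hacyc : Acyclic D)
    (hsinks : ∀ j k, E j k → a k = Act.e → D j k)
    (hht : ∀ j k, E j k → a j = Act.h → a k = Act.t → D j k)
    (j : V) (hj : a j = Act.h) (hj' : nextA E D a b j = Act.h) :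
    ∀ k, Relation.TransGen (dH D (nextA E D a b)) k j → Relation.TransGen D k j :=
  transitive_dominator_does_not_grow_general E D a b j hj'
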